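/- (Limits of discounted robust Nash Equilibria are average-reward Nash Equilibria.) Assume the multi-agent irreducibility assumption (for every deterministic joint policy d : S → A and every kernel P ∈ 𝒫, the matrix P^d is irreducible) and that each 𝒫^a_s is nonempty, compact, and convex. Let {γ_t} ⊆ [0,1) be a sequence of discount factors with γ_t → 1, and for each t let π_t be a Nash Equilibrium of the γ_t-discounted distributionally robust Markov game, i.e. V^{π_t}_{𝒫,γ_t,i}(s) ≥ V^{((π_t)_{−i}, μ_i)}_{𝒫,γ_t,i}(s) for all i, all μ_i : S → Δ(A_i), and all s. If π_t → π (pointwise convergence of (π_t)_i(a_i|s) for all i, a_i, s), then π is a Nash Equilibrium of the average-reward distributionally robust Markov game: g^{π}_{𝒫,i}(s) ≥ g^{(π_{−i}, μ_i)}_{𝒫,i}(s) for all i, all μ_i, and all s. -/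

import Mathlib

open scoped BigOperators
open Matrix Filter

/-- Support function `σ_Q(V) = min_{p ∈ Q} ∑_{s'} p(s') V(s')` (as an infimum,
which is attained when `Q` is nonempty and compact). -/
noncomputable def suppF {S : Type*} [Fintype S] (Q : Set (S → ℝ)) (V : S → ℝ) : ℝ :=
  sInf ((fun p => ∑ s', p s' * V s') '' Q)

/-- The stochastic matrix `P^π` induced by a stationary policy `π` and a kernel `P`. -/
noncomputable def polMat {S A : Type*} [Fintype S] [Fintype A]
    (π : S → A → ℝ) (P : S → A → S → ℝ) : Matrix S S ℝ :=
  Matrix.of fun s s' => ∑ a, π s a * P s a s'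

/-- The reward vector `r^π`. -/
noncomputable def polRew {S A : Type*} [Fintype A]
    (π : S → A → ℝ) (r : S → A → ℝ) : S → ℝ :=
  fun s => ∑ a, π s a * r s a

/-- The average reward `g^π_P(s) = liminf_n (1/n) ∑_{t<n} ((P^π)^t r^π)(s)`. -/
noncomputable def avgR {S A : Type*} [Fintype S] [DecidableEq S] [Fintype A]
    (π : S → A → ℝ) (P : S → A → S → ℝ) (r : S → A → ℝ) (s : S) : ℝ :=
  Filter.liminf
    (fun n : ℕ => (∑ t ∈ Finset.range n, ((polMat π P ^ t) *ᵥ polRew π r) s) / n)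
    Filter.atTop

/-- The robust average reward `g^π_U(s) = inf_{P ∈ U} g^π_P(s)`. -/
noncomputable def robAvgR {S A : Type*} [Fintype S] [DecidableEq S] [Fintype A]
    (U : S → A → Set (S → ℝ)) (π : S → A → ℝ) (r : S → A → ℝ) (s : S) : ℝ :=
  sInf {x | ∃ P : S → A → S → ℝ, (∀ s' a, P s' a ∈ U s' a) ∧ x = avgR π P r s}

/-- A stochastic matrix is irreducible: all states communicate. -/
def IrredM {S : Type*} [Fintype S] [DecidableEq S] (M : Matrix S S ℝ) : Prop :=
  ∀ s s' : S, ∃ k : ℕ, 1 ≤ k ∧ 0 < (M ^ k) s s'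

/-- Assumption 1: for every deterministic policy `d` and every kernel `P ∈ U`,
the matrix `P^d` is irreducible. -/
def Assump1 {S A : Type*} [Fintype S] [DecidableEq S]
    (U : S → A → Set (S → ℝ)) : Prop :=
  ∀ (d : S → A) (P : S → A → S → ℝ), (∀ s a, P s a ∈ U s a) →
    IrredM (Matrix.of fun s s' => P s (d s) s')

/-- The joint policy `π(a|s) = ∏ i π_i(a_i|s)` of a product policy. -/
noncomputable def jointPol {S : Type*} {N : ℕ} {A : Fin N → Type*}
    (π : ∀ i, S → A i → ℝ) : S → (∀ i, A i) → ℝ :=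
  fun s a => ∏ i, π i s (a i)

/-- The `γ`-discounted value `V^π_{P,γ}(s) = ∑_{t=0}^∞ γ^t ((P^π)^t r^π)(s)`. -/
noncomputable def discR {S A : Type*} [Fintype S] [DecidableEq S] [Fintype A]
    (π : S → A → ℝ) (P : S → A → S → ℝ) (r : S → A → ℝ) (γ : ℝ) (s : S) : ℝ :=
  ∑' t : ℕ, γ ^ t * ((polMat π P ^ t) *ᵥ polRew π r) s

/-- The robust `γ`-discounted value `V^π_{U,γ}(s) = inf_{P ∈ U} V^π_{P,γ}(s)`. -/
noncomputable def robDiscR {S A : Type*} [Fintype S] [DecidableEq S] [Fintype A]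
    (U : S → A → Set (S → ℝ)) (π : S → A → ℝ) (r : S → A → ℝ) (γ : ℝ) (s : S) : ℝ :=
  sInf {x | ∃ P : S → A → S → ℝ, (∀ s' a, P s' a ∈ U s' a) ∧ x = discR π P r γ s}

/-!
Write `V` for the discounted value of a policy and `Q` for its transition matrix. Irreducibility
of every deterministic policy, together with compactness of the policies and of the uncertainty
sets, gives a minorization `α ≤ ∑_{k=1}^K Q^k` that is uniform in the policy and the kernel,
hence a bound on the span of `V` that does not depend on the discount either. Consequently
`(1 - γ) V` is Lipschitz in the policy and in the kernel uniformly in `γ`, so the discounted Nash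
inequalities pass to the limit policies. Finally `(1 - γ) V` tends to the average reward, because
the Abel and the Cesàro means of `Q^t v` have the same limit (`ℝ^S = ker (1 - Q) ⊕ range (1 - Q)`);
for the deviating policy this is applied to a limit of near-optimal kernels of the discounted games.
-/

namespace Matrix

variable {S : Type*} [Fintype S] [DecidableEq S] {M : Matrix S S ℝ} {v : S → ℝ} {b : ℝ}

theorem mulVec_le_of_mem_rowStochastic (hM : M ∈ rowStochastic ℝ S) (hv : ∀ x, v x ≤ b)
    (s : S) : (M *ᵥ v) s ≤ b :=
  calc (M *ᵥ v) s = ∑ x, M s x * v x := rfl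
    _ ≤ ∑ x, M s x * b := Finset.sum_le_sum fun x _ =>
        mul_le_mul_of_nonneg_left (hv x) (nonneg_of_mem_rowStochastic hM)
    _ = b := by rw [← Finset.sum_mul, sum_row_of_mem_rowStochastic hM, one_mul]

theorem le_mulVec_of_mem_rowStochastic (hM : M ∈ rowStochastic ℝ S) (hv : ∀ x, b ≤ v x)
    (s : S) : b ≤ (M *ᵥ v) s :=
  calc b = ∑ x, M s x * b := by rw [← Finset.sum_mul, sum_row_of_mem_rowStochastic hM, one_mul]
    _ ≤ ∑ x, M s x * v x := Finset.sum_le_sum fun x _ =>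
        mul_le_mul_of_nonneg_left (hv x) (nonneg_of_mem_rowStochastic hM)
    _ = (M *ᵥ v) s := rfl

theorem abs_mulVec_le_of_mem_rowStochastic (hM : M ∈ rowStochastic ℝ S)
    (hv : ∀ x, |v x| ≤ b) (s : S) : |(M *ᵥ v) s| ≤ b :=
  abs_le.2 ⟨le_mulVec_of_mem_rowStochastic hM (fun x => (abs_le.1 (hv x)).1) s,
    mulVec_le_of_mem_rowStochastic hM (fun x => (abs_le.1 (hv x)).2) s⟩

end Matrix

theorem IrredM.of_pos_imp_pos {S : Type*} [Fintype S] [DecidableEq S] {B M : Matrix S S ℝ}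
    (hB : B ∈ rowStochastic ℝ S) (hM : M ∈ rowStochastic ℝ S)
    (hBM : ∀ s s', 0 < B s s' → 0 < M s s') (h : IrredM B) : IrredM M := by
  have hpow : ∀ k s s', 0 < (B ^ k) s s' → 0 < (M ^ k) s s' := by
    intro k
    induction k with
    | zero => simp
    | succ k ih =>
      intro s s' hpos
      rw [pow_succ, mul_apply] at hpos ⊢
      obtain ⟨x, -, hx⟩ := (Finset.sum_pos_iff_of_nonneg fun x _ =>
        mul_nonneg (nonneg_of_mem_rowStochastic (pow_mem hB k))
          (nonneg_of_mem_rowStochastic hB)).1 hpos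
      have hx₁ := ih s x (pos_of_mul_pos_left hx (nonneg_of_mem_rowStochastic hB))
      have hx₂ := hBM x s' (pos_of_mul_pos_right hx (nonneg_of_mem_rowStochastic (pow_mem hB k)))
      exact Finset.sum_pos' (fun y _ => mul_nonneg (nonneg_of_mem_rowStochastic (pow_mem hM k))
        (nonneg_of_mem_rowStochastic hM)) ⟨x, Finset.mem_univ x, mul_pos hx₁ hx₂⟩
  intro s s'
  obtain ⟨k, hk, hpos⟩ := h s s'
  exact ⟨k, hk, hpow k s s' hpos⟩

/-- Dobrushin's contraction estimate. -/
theorem sum_mul_sub_sum_mul_le {S : Type*} [Fintype S] [Nonempty S] {p q V : S → ℝ}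
    {β m D : ℝ} (hp : ∀ x, β ≤ p x) (hq : ∀ x, β ≤ q x) (hpm : ∑ x, p x = m)
    (hqm : ∑ x, q x = m) (hV : ∀ x y, V x - V y ≤ D) :
    ∑ x, p x * V x - ∑ x, q x * V x ≤ (m - Fintype.card S * β) * D := by
  obtain ⟨x₀, hx₀⟩ := Finite.exists_min V
  have hsplit : ∀ w : S → ℝ, ∑ x, w x * V x = ∑ x, (w x - β) * (V x - V x₀)
      + β * ∑ x, V x + (∑ x, w x - Fintype.card S * β) * V x₀ := by
    intro w
    simp only [sub_mul, mul_sub, Finset.sum_sub_distrib, ← Finset.sum_mul, ← Finset.mul_sum,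
      Finset.sum_const, Finset.card_univ, nsmul_eq_mul]
    ring
  have hp' : ∑ x, (p x - β) * (V x - V x₀) ≤ (m - Fintype.card S * β) * D :=
    calc ∑ x, (p x - β) * (V x - V x₀) ≤ ∑ x, (p x - β) * D := by
          gcongr with x
          · linarith [hp x]
          · exact hV x x₀
      _ = (m - Fintype.card S * β) * D := by
          simp [← Finset.sum_mul, Finset.sum_sub_distrib, hpm]
  have hq' : 0 ≤ ∑ x, (q x - β) * (V x - V x₀) :=
    Finset.sum_nonneg fun x _ => mul_nonneg (by linarith [hq x]) (by linarith [hx₀ x])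
  rw [hsplit p, hsplit q, hpm, hqm]
  linarith

section Geometric

variable {γ B : ℝ} {b : ℕ → ℝ}

theorem summable_pow_mul_of_abs_le (hγ : γ ∈ Set.Ico (0 : ℝ) 1) (hb : ∀ t, |b t| ≤ B) :
    Summable fun t : ℕ => γ ^ t * b t :=
  ((summable_geometric_of_lt_one hγ.1 hγ.2).mul_left B).of_norm_bounded fun t => by
    rw [norm_mul, norm_pow, Real.norm_of_nonneg hγ.1, Real.norm_eq_abs, mul_comm B]
    exact mul_le_mul_of_nonneg_left (hb t) (pow_nonneg hγ.1 t)

theorem abs_tsum_pow_mul_le (hγ : γ ∈ Set.Ico (0 : ℝ) 1) (hb : ∀ t, |b t| ≤ B) :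
    |∑' t : ℕ, γ ^ t * b t| ≤ B * (1 - γ)⁻¹ := by
  rw [← Real.norm_eq_abs]
  refine tsum_of_norm_bounded ((hasSum_geometric_of_lt_one hγ.1 hγ.2).mul_left B) fun t => ?_
  rw [norm_mul, norm_pow, Real.norm_of_nonneg hγ.1, Real.norm_eq_abs, mul_comm B]
  exact mul_le_mul_of_nonneg_left (hb t) (pow_nonneg hγ.1 t)

end Geometric

section DiscountedValue

variable {S : Type*} [Fintype S] [DecidableEq S]

noncomputable def discountedValue (Q : Matrix S S ℝ) (v : S → ℝ) (γ : ℝ) (s : S) : ℝ :=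
  ∑' t : ℕ, γ ^ t * (Q ^ t *ᵥ v) s

variable {Q : Matrix S S ℝ} {v : S → ℝ} {γ : ℝ}

theorem pow_mulVec_mem_Icc (hQ : Q ∈ rowStochastic ℝ S) (hv : ∀ s, v s ∈ Set.Icc (0 : ℝ) 1)
    (t : ℕ) (s : S) : (Q ^ t *ᵥ v) s ∈ Set.Icc (0 : ℝ) 1 :=
  ⟨le_mulVec_of_mem_rowStochastic (pow_mem hQ t) (fun x => (hv x).1) s,
    mulVec_le_of_mem_rowStochastic (pow_mem hQ t) (fun x => (hv x).2) s⟩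

theorem summable_discountedValue (hQ : Q ∈ rowStochastic ℝ S)
    (hv : ∀ s, v s ∈ Set.Icc (0 : ℝ) 1) (hγ : γ ∈ Set.Ico (0 : ℝ) 1) (s : S) :
    Summable fun t : ℕ => γ ^ t * (Q ^ t *ᵥ v) s :=
  summable_pow_mul_of_abs_le hγ fun t =>
    abs_le.2 ⟨by linarith [(pow_mulVec_mem_Icc hQ hv t s).1], (pow_mulVec_mem_Icc hQ hv t s).2⟩

theorem discountedValue_mem_Icc (hQ : Q ∈ rowStochastic ℝ S)
    (hv : ∀ s, v s ∈ Set.Icc (0 : ℝ) 1) (hγ : γ ∈ Set.Ico (0 : ℝ) 1) (s : S) :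
    discountedValue Q v γ s ∈ Set.Icc 0 (1 - γ)⁻¹ := by
  have ht := pow_mulVec_mem_Icc hQ hv
  refine ⟨tsum_nonneg fun t => mul_nonneg (pow_nonneg hγ.1 t) (ht t s).1, ?_⟩
  rw [← tsum_geometric_of_lt_one hγ.1 hγ.2]
  exact (summable_discountedValue hQ hv hγ s).tsum_le_tsum
    (fun t => mul_le_of_le_one_right (pow_nonneg hγ.1 t) (ht t s).2)
    (summable_geometric_of_lt_one hγ.1 hγ.2)

theorem discountedValue_eq_add_smul_mulVec (hQ : Q ∈ rowStochastic ℝ S)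
    (hv : ∀ s, v s ∈ Set.Icc (0 : ℝ) 1) (hγ : γ ∈ Set.Ico (0 : ℝ) 1) :
    discountedValue Q v γ = v + γ • Q *ᵥ discountedValue Q v γ := by
  set f : ℕ → S → ℝ := fun t => γ ^ t • (Q ^ t *ᵥ v)
  have hf : HasSum f (discountedValue Q v γ) :=
    Pi.hasSum.2 fun s => (summable_discountedValue hQ hv hγ s).hasSum
  have hshift : HasSum (fun t => f (t + 1)) (discountedValue Q v γ - v) := by
    simpa [f] using (hasSum_nat_add_iff' 1).2 hf
  have hmap : HasSum (fun t => f (t + 1)) (γ • Q *ᵥ discountedValue Q v γ) := by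
    convert (hf.map Q.mulVecLin (LinearMap.continuous_of_finiteDimensional _)).const_smul γ
      using 1
    · ext1 t
      simp [f, pow_succ', mul_smul, mulVec_mulVec]
    · rw [mulVecLin_apply]
  rw [← hshift.unique hmap, add_sub_cancel]

theorem abs_sub_mulVec_discountedValue_le (hQ : Q ∈ rowStochastic ℝ S)
    (hv : ∀ s, v s ∈ Set.Icc (0 : ℝ) 1) (hγ : γ ∈ Set.Ico (0 : ℝ) 1) (s : S) :
    |discountedValue Q v γ s - (Q *ᵥ discountedValue Q v γ) s| ≤ 1 := by
  have hV := discountedValue_mem_Icc hQ hv hγ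
  have hQV₀ := le_mulVec_of_mem_rowStochastic hQ (fun x => (hV x).1) s
  have hQV₁ : (1 - γ) * (Q *ᵥ discountedValue Q v γ) s ≤ 1 := by
    have h1γ : 0 < 1 - γ := by linarith [hγ.2]
    calc (1 - γ) * (Q *ᵥ discountedValue Q v γ) s ≤ (1 - γ) * (1 - γ)⁻¹ := by
          gcongr; exact mulVec_le_of_mem_rowStochastic hQ (fun x => (hV x).2) s
      _ = 1 := mul_inv_cancel₀ h1γ.ne'
  have hbell := congrFun (discountedValue_eq_add_smul_mulVec hQ hv hγ) s
  simp only [Pi.add_apply, Pi.smul_apply, smul_eq_mul] at hbell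
  rw [abs_le]
  constructor <;> nlinarith [(hv s).1, (hv s).2, hγ.1, hγ.2]

theorem abs_sub_pow_mulVec_discountedValue_le (hQ : Q ∈ rowStochastic ℝ S)
    (hv : ∀ s, v s ∈ Set.Icc (0 : ℝ) 1) (hγ : γ ∈ Set.Ico (0 : ℝ) 1) (k : ℕ) (s : S) :
    |discountedValue Q v γ s - (Q ^ k *ᵥ discountedValue Q v γ) s| ≤ k := by
  set V := discountedValue Q v γ
  induction k generalizing s with
  | zero => simp
  | succ k ih =>
    have hstep : V s - (Q ^ (k + 1) *ᵥ V) s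
        = (V s - (Q ^ k *ᵥ V) s) + (Q ^ k *ᵥ (V - Q *ᵥ V)) s := by
      rw [mulVec_sub, pow_succ, ← mulVec_mulVec, Pi.sub_apply]
      ring
    have hlast := abs_mulVec_le_of_mem_rowStochastic (pow_mem hQ k)
      (abs_sub_mulVec_discountedValue_le hQ hv hγ) s
    rw [hstep]
    push_cast
    exact (abs_add_le _ _).trans (add_le_add (ih s) hlast)

/-- The block sum `∑_{k=1}^K Q^k` contracts the span of `V` (Dobrushin), while
`|K V - ∑_{k=1}^K Q^k V| ≤ K^2` because `V - QV = v - (1 - γ) QV` takes values in `[-1, 1]`. -/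
theorem discountedValue_sub_le_of_minorization (hQ : Q ∈ rowStochastic ℝ S)
    (hv : ∀ s, v s ∈ Set.Icc (0 : ℝ) 1) (hγ : γ ∈ Set.Ico (0 : ℝ) 1) {K : ℕ} {α : ℝ}
    (hα : 0 < α) (hmin : ∀ s s', α ≤ ∑ k ∈ Finset.Icc 1 K, (Q ^ k) s s') (s s' : S) :
    discountedValue Q v γ s - discountedValue Q v γ s' ≤ 2 * K ^ 2 / (Fintype.card S * α) := by
  have : Nonempty S := ⟨s⟩
  set V := discountedValue Q v γ
  set T : S → S → ℝ := fun x y => ∑ k ∈ Finset.Icc 1 K, (Q ^ k) x y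
  have hrow : ∀ x, ∑ y, T x y = K := by
    intro x
    simp only [T]
    rw [Finset.sum_comm, Finset.sum_congr rfl fun k _ => sum_row_of_mem_rowStochastic
      (pow_mem hQ k) x]
    simp
  have hTV : ∀ x, |K * V x - ∑ y, T x y * V y| ≤ K ^ 2 := by
    intro x
    have hsplit : K * V x - ∑ y, T x y * V y
        = ∑ k ∈ Finset.Icc 1 K, (V x - (Q ^ k *ᵥ V) x) := by
      simp only [T, Finset.sum_mul, Finset.sum_sub_distrib, mulVec, dotProduct]
      rw [Finset.sum_comm, Finset.sum_const, Nat.card_Icc, nsmul_eq_mul]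
      simp
    rw [hsplit, sq]
    calc |∑ k ∈ Finset.Icc 1 K, (V x - (Q ^ k *ᵥ V) x)|
        ≤ ∑ k ∈ Finset.Icc 1 K, |V x - (Q ^ k *ᵥ V) x| := Finset.abs_sum_le_sum_abs _ _
      _ ≤ ∑ _k ∈ Finset.Icc 1 K, (K : ℝ) := Finset.sum_le_sum fun k hk =>
          (abs_sub_pow_mulVec_discountedValue_le hQ hv hγ k x).trans
            (by exact_mod_cast (Finset.mem_Icc.1 hk).2)
      _ = K * K := by simp
  obtain ⟨⟨a, b⟩, hab⟩ := Finite.exists_max fun p : S × S => V p.1 - V p.2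
  have hD : ∀ x y, V x - V y ≤ V a - V b := fun x y => hab (x, y)
  have hdob := sum_mul_sub_sum_mul_le (fun y => hmin a y) (fun y => hmin b y) (hrow a)
    (hrow b) hD
  have hcard : (0 : ℝ) < Fintype.card S := by exact_mod_cast Fintype.card_pos
  have hspan : V a - V b ≤ 2 * K ^ 2 / (Fintype.card S * α) := by
    rw [le_div_iff₀ (by positivity)]
    nlinarith [abs_le.1 (hTV a), abs_le.1 (hTV b)]
  exact (hD s s').trans hspan

theorem discountedValue_sub_discountedValue {Q' : Matrix S S ℝ} {v' : S → ℝ}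
    (hQ : Q ∈ rowStochastic ℝ S) (hQ' : Q' ∈ rowStochastic ℝ S)
    (hv : ∀ s, v s ∈ Set.Icc (0 : ℝ) 1) (hv' : ∀ s, v' s ∈ Set.Icc (0 : ℝ) 1)
    (hγ : γ ∈ Set.Ico (0 : ℝ) 1) (s : S) :
    discountedValue Q v γ s - discountedValue Q' v' γ s = (v s - v' s) + γ *
      ((Q *ᵥ (discountedValue Q v γ - discountedValue Q' v' γ)) s
        + ∑ x, (Q s x - Q' s x) * (discountedValue Q' v' γ x - discountedValue Q' v' γ s)) := by
  set V := discountedValue Q v γ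
  set V' := discountedValue Q' v' γ
  -- the rows of `Q - Q'` sum to zero, so `(Q - Q') V'` only sees the oscillation of `V'`
  have hrow : ∑ x, (Q s x - Q' s x) * V' s = 0 := by
    rw [← Finset.sum_mul, Finset.sum_sub_distrib, sum_row_of_mem_rowStochastic hQ,
      sum_row_of_mem_rowStochastic hQ', sub_self, zero_mul]
  have h₁ : V s = v s + γ * (Q *ᵥ V) s :=
    congrFun (discountedValue_eq_add_smul_mulVec hQ hv hγ) s
  have h₂ : V' s = v' s + γ * (Q' *ᵥ V') s :=
    congrFun (discountedValue_eq_add_smul_mulVec hQ' hv' hγ) s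
  simp only [mul_sub, Finset.sum_sub_distrib, sub_mul, mulVec, dotProduct,
    Pi.sub_apply] at hrow h₁ h₂ ⊢
  linear_combination h₁ - h₂ + γ * hrow

theorem one_sub_mul_abs_discountedValue_sub_le {Q' : Matrix S S ℝ} {v' : S → ℝ}
    (hQ : Q ∈ rowStochastic ℝ S) (hQ' : Q' ∈ rowStochastic ℝ S)
    (hv : ∀ s, v s ∈ Set.Icc (0 : ℝ) 1) (hv' : ∀ s, v' s ∈ Set.Icc (0 : ℝ) 1)
    (hγ : γ ∈ Set.Ico (0 : ℝ) 1) {η η' C : ℝ} (hvv : ∀ s, |v s - v' s| ≤ η)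
    (hQQ : ∀ s, ∑ x, |Q s x - Q' s x| ≤ η')
    (hC : ∀ x y, discountedValue Q' v' γ x - discountedValue Q' v' γ y ≤ C) (s : S) :
    (1 - γ) * |discountedValue Q v γ s - discountedValue Q' v' γ s| ≤ η + η' * C := by
  have : Nonempty S := ⟨s⟩
  set V := discountedValue Q v γ
  set V' := discountedValue Q' v' γ
  obtain ⟨x₀, hx₀⟩ := Finite.exists_max fun x => |V x - V' x|
  set Δ := |V x₀ - V' x₀|
  have hdiff := discountedValue_sub_discountedValue hQ hQ' hv hv' hγ x₀
  have hQΔ : |(Q *ᵥ (V - V')) x₀| ≤ Δ := abs_mulVec_le_of_mem_rowStochastic hQ hx₀ x₀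
  have hQQ' : |∑ x, (Q x₀ x - Q' x₀ x) * (V' x - V' x₀)| ≤ η' * C :=
    calc |∑ x, (Q x₀ x - Q' x₀ x) * (V' x - V' x₀)|
        ≤ ∑ x, |Q x₀ x - Q' x₀ x| * C := by
          refine (Finset.abs_sum_le_sum_abs _ _).trans (Finset.sum_le_sum fun x _ => ?_)
          rw [abs_mul]
          exact mul_le_mul_of_nonneg_left (abs_le.2 ⟨by linarith [hC x₀ x], hC x x₀⟩)
            (abs_nonneg _)
      _ ≤ η' * C := by
          rw [← Finset.sum_mul]
          exact mul_le_mul_of_nonneg_right (hQQ x₀) (by simpa using hC x₀ x₀)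
  have hη' : 0 ≤ η' := (Finset.sum_nonneg fun x _ => abs_nonneg _).trans (hQQ x₀)
  have hC₀ : 0 ≤ C := by simpa using hC x₀ x₀
  have hΔ : Δ ≤ η + γ * (Δ + η' * C) := by
    calc Δ = |V x₀ - V' x₀| := rfl
      _ ≤ |v x₀ - v' x₀| + γ * (|(Q *ᵥ (V - V')) x₀|
          + |∑ x, (Q x₀ x - Q' x₀ x) * (V' x - V' x₀)|) := by
          rw [hdiff]
          refine (abs_add_le _ _).trans (add_le_add le_rfl ?_)
          rw [abs_mul, abs_of_nonneg hγ.1]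
          exact mul_le_mul_of_nonneg_left (abs_add_le _ _) hγ.1
      _ ≤ η + γ * (Δ + η' * C) :=
          add_le_add (hvv x₀) (mul_le_mul_of_nonneg_left (add_le_add hQΔ hQQ') hγ.1)
  calc (1 - γ) * |V s - V' s| ≤ (1 - γ) * Δ :=
        mul_le_mul_of_nonneg_left (hx₀ s) (by linarith [hγ.2])
    _ ≤ η + η' * C := by nlinarith [mul_nonneg hη' hC₀, hγ.2]

end DiscountedValue

section CesaroAbel

open Topology

variable {u a : ℕ → ℝ} {c B : ℝ}

theorem tendsto_cesaro_of_eq_add_sub (ha : ∀ t, |a t| ≤ B)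
    (hu : ∀ t, u t = c + (a t - a (t + 1))) :
    Tendsto (fun n : ℕ => (∑ t ∈ Finset.range n, u t) / n) atTop (𝓝 c) := by
  have hsum : ∀ n : ℕ, ∑ t ∈ Finset.range n, u t = n * c + (a 0 - a n) := by
    intro n
    simp only [hu, Finset.sum_add_distrib, Finset.sum_range_sub', Finset.sum_const,
      Finset.card_range, nsmul_eq_mul]
  have herr : Tendsto (fun n : ℕ => (a 0 - a n) / n) atTop (𝓝 0) := by
    refine squeeze_zero_norm (fun n => ?_) (tendsto_const_div_atTop_nhds_zero_nat (2 * B))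
    rw [Real.norm_eq_abs, abs_div, Nat.abs_cast]
    gcongr
    linarith [abs_sub (a 0) (a n), ha 0, ha n]
  refine (by simpa using tendsto_const_nhds.add herr : Tendsto _ _ (𝓝 c)).congr' ?_
  filter_upwards [eventually_ne_atTop 0] with n hn
  rw [hsum, add_div, mul_div_cancel_left₀ _ (Nat.cast_ne_zero.2 hn)]

theorem abs_one_sub_mul_tsum_sub_le_of_eq_add_sub {γ : ℝ} (ha : ∀ t, |a t| ≤ B)
    (hu : ∀ t, u t = c + (a t - a (t + 1))) (hγ : γ ∈ Set.Ico (0 : ℝ) 1) :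
    |(1 - γ) * ∑' t : ℕ, γ ^ t * u t - c| ≤ (1 - γ) * (2 * B) := by
  have h1γ : 0 < 1 - γ := by linarith [hγ.2]
  have hsa := summable_pow_mul_of_abs_le hγ ha
  have hsa' := summable_pow_mul_of_abs_le hγ fun t => ha (t + 1)
  set A := ∑' t : ℕ, γ ^ t * a (t + 1)
  have hA : (1 - γ) * |A| ≤ B := by
    have := abs_tsum_pow_mul_le hγ fun t => ha (t + 1)
    rwa [← le_div_iff₀' h1γ, div_eq_mul_inv]
  have hshift : ∑' t : ℕ, γ ^ t * a t = a 0 + γ * A := by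
    rw [hsa.tsum_eq_zero_add, ← tsum_mul_left]
    simp [pow_succ, mul_assoc, mul_left_comm]
  have hval : ∑' t : ℕ, γ ^ t * u t = c * (1 - γ)⁻¹ + (a 0 + γ * A - A) := by
    rw [← hshift, ← (((hasSum_geometric_of_lt_one hγ.1 hγ.2).mul_left c).add
      (hsa.hasSum.sub hsa'.hasSum)).tsum_eq]
    exact tsum_congr fun t => by rw [hu]; ring
  have hrw : (1 - γ) * ∑' t : ℕ, γ ^ t * u t - c = (1 - γ) * (a 0 - (1 - γ) * A) := by
    rw [hval]
    field_simp
    ring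
  rw [hrw, abs_mul, abs_of_pos h1γ]
  gcongr
  calc |a 0 - (1 - γ) * A| ≤ |a 0| + |(1 - γ) * A| := abs_sub _ _
    _ = |a 0| + (1 - γ) * |A| := by rw [abs_mul, abs_of_pos h1γ]
    _ ≤ 2 * B := by linarith [ha 0]

theorem tendsto_abel_of_eq_add_sub (ha : ∀ t, |a t| ≤ B)
    (hu : ∀ t, u t = c + (a t - a (t + 1))) :
    Tendsto (fun γ : ℝ => (1 - γ) * ∑' t : ℕ, γ ^ t * u t) (𝓝[<] 1) (𝓝 c) := by
  rw [tendsto_iff_norm_sub_tendsto_zero]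
  refine squeeze_zero_norm' (a := fun γ => (1 - γ) * (2 * B)) ?_ ?_
  · filter_upwards [Ioo_mem_nhdsLT (show (0 : ℝ) < 1 by norm_num)] with γ hγ
    rw [norm_norm]
    exact abs_one_sub_mul_tsum_sub_le_of_eq_add_sub ha hu ⟨hγ.1.le, hγ.2⟩
  · refine tendsto_nhdsWithin_of_tendsto_nhds ?_
    exact (by fun_prop : Continuous fun γ : ℝ => (1 - γ) * (2 * B)).tendsto' 1 0 (by simp)

end CesaroAbel

namespace Matrix

open Topology

variable {S : Type*} [Fintype S] [DecidableEq S] {M : Matrix S S ℝ}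

/-- `n • x = ∑_{t<n} M^t x = w - M^n w` is bounded in `n`. -/
theorem eq_zero_of_mulVec_eq_self_of_eq_sub_mulVec (hM : M ∈ rowStochastic ℝ S) {x w : S → ℝ}
    (hx : M *ᵥ x = x) (hxw : x = w - M *ᵥ w) : x = 0 := by
  have hpow : ∀ n : ℕ, M ^ n *ᵥ x = x := by
    intro n
    induction n with
    | zero => simp
    | succ n ih => rw [pow_succ', ← mulVec_mulVec, ih, hx]
  have htel : ∀ n : ℕ, (n : ℝ) • x = w - M ^ n *ᵥ w := by
    intro n
    have := Finset.sum_range_sub' (fun t => M ^ t *ᵥ w) n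
    simp only [pow_succ, ← mulVec_mulVec, ← mulVec_sub, ← hxw, hpow, Finset.sum_const,
      Finset.card_range, pow_zero, one_mulVec] at this
    rw [← this, Nat.cast_smul_eq_nsmul]
  have hw : ∀ y, |w y| ≤ ‖w‖ := fun y => norm_le_pi_norm w y
  ext s
  have hbound : ∀ n : ℕ, n * |x s| ≤ 2 * ‖w‖ := by
    intro n
    have := congrFun (htel n) s
    simp only [Pi.smul_apply, smul_eq_mul, Pi.sub_apply] at this
    rw [← abs_of_nonneg (Nat.cast_nonneg (α := ℝ) n), ← abs_mul, this]
    linarith [abs_sub (w s) ((M ^ n *ᵥ w) s), hw s,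
      abs_mulVec_le_of_mem_rowStochastic (pow_mem hM n) hw s]
  by_contra hne
  have hpos : 0 < |x s| := abs_pos.2 hne
  obtain ⟨n, hn⟩ := exists_nat_gt (2 * ‖w‖ / |x s|)
  linarith [(div_lt_iff₀ hpos).1 hn, hbound n]

theorem exists_eq_add_sub_mulVec (hM : M ∈ rowStochastic ℝ S) (v : S → ℝ) :
    ∃ y w : S → ℝ, M *ᵥ y = y ∧ v = y + (w - M *ᵥ w) := by
  set f : (S → ℝ) →ₗ[ℝ] (S → ℝ) := LinearMap.id - M.mulVecLin
  have hf : ∀ x, f x = x - M *ᵥ x := fun x => rfl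
  have hker : ∀ x ∈ LinearMap.ker f, M *ᵥ x = x := fun x hx =>
    (sub_eq_zero.1 ((hf x).symm.trans hx)).symm
  have hdisj : Disjoint (LinearMap.ker f) (LinearMap.range f) := by
    rw [Submodule.disjoint_def]
    rintro x hx ⟨w, rfl⟩
    exact eq_zero_of_mulVec_eq_self_of_eq_sub_mulVec hM (hker _ hx) (hf w)
  have hcompl : IsCompl (LinearMap.ker f) (LinearMap.range f) :=
    (Submodule.isCompl_iff_disjoint _ _ (by rw [add_comm, f.finrank_range_add_finrank_ker])).2
      hdisj
  obtain ⟨y, hy, _, ⟨w, rfl⟩, hyw⟩ :=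
    Submodule.mem_sup.1 (hcompl.sup_eq_top ▸ Submodule.mem_top : v ∈ _ ⊔ _)
  exact ⟨y, w, hker y hy, hyw.symm⟩

theorem exists_tendsto_cesaro_and_abel (hM : M ∈ rowStochastic ℝ S) (v : S → ℝ) (s : S) :
    ∃ c : ℝ, Tendsto (fun n : ℕ => (∑ t ∈ Finset.range n, (M ^ t *ᵥ v) s) / n) atTop (𝓝 c) ∧
      Tendsto (fun γ : ℝ => (1 - γ) * ∑' t : ℕ, γ ^ t * (M ^ t *ᵥ v) s) (𝓝[<] 1) (𝓝 c) := by
  obtain ⟨y, w, hy, rfl⟩ := exists_eq_add_sub_mulVec hM v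
  have hpow : ∀ t : ℕ, M ^ t *ᵥ y = y := by
    intro t
    induction t with
    | zero => simp
    | succ t ih => rw [pow_succ', ← mulVec_mulVec, ih, hy]
  have hu : ∀ t : ℕ, (M ^ t *ᵥ (y + (w - M *ᵥ w))) s
      = y s + ((M ^ t *ᵥ w) s - (M ^ (t + 1) *ᵥ w) s) := by
    intro t
    rw [mulVec_add, mulVec_sub, hpow, pow_succ, ← mulVec_mulVec]
    rfl
  have ha : ∀ t : ℕ, |(M ^ t *ᵥ w) s| ≤ ‖w‖ :=
    fun t => abs_mulVec_le_of_mem_rowStochastic (pow_mem hM t) (norm_le_pi_norm w) s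
  exact ⟨y s, tendsto_cesaro_of_eq_add_sub ha hu, tendsto_abel_of_eq_add_sub ha hu⟩

end Matrix

theorem IsCompact.exists_pos_le_of_forall_exists_pos {X ι : Type*} [TopologicalSpace X]
    [Fintype ι] [Nonempty ι] {K : Set X} (hK : IsCompact K) {f : ℕ → X → ι → ℝ}
    (hf : ∀ n i, Continuous fun x => f n x i) (hmono : ∀ x ∈ K, Monotone fun n => f n x)
    (hpos : ∀ x ∈ K, ∃ n, ∀ i, 0 < f n x i) :
    ∃ n, ∃ α > 0, ∀ x ∈ K, ∀ i, α ≤ f n x i := by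
  set O : ℕ → Set X := fun n => {x | ∀ i, 0 < f n x i}
  have hO : ∀ n, IsOpen (O n) := fun n => by
    simp only [O, Set.ofPred_forall]
    exact isOpen_iInter_of_finite fun i => isOpen_lt continuous_const (hf n i)
  obtain ⟨F, hF⟩ := hK.elim_finite_subcover O hO fun x hx => Set.mem_iUnion.2 (hpos x hx)
  have hn : ∀ x ∈ K, ∀ i, 0 < f (F.sup id) x i := by
    intro x hx i
    obtain ⟨m, hm, hxm⟩ := Set.mem_iUnion₂.1 (hF hx)
    exact (hxm i).trans_le (hmono x hx (Finset.le_sup (f := id) hm) i)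
  choose α hα₀ hα using fun i =>
    hK.exists_forall_le' (hf (F.sup id) i).continuousOn fun x hx => hn x hx i
  exact ⟨F.sup id, Finset.univ.inf' Finset.univ_nonempty α,
    (Finset.lt_inf'_iff _).2 fun i _ => hα₀ i,
    fun x hx i => (Finset.inf'_le _ (Finset.mem_univ i)).trans (hα i x hx)⟩

section Policies

variable {S A : Type*} [Fintype A] {τ τ' : S → A → ℝ} {P P' : S → A → S → ℝ}
  {r : S → A → ℝ}

theorem polRew_mem_Icc (hτ : ∀ s, τ s ∈ stdSimplex ℝ A)
    (hr : ∀ s a, r s a ∈ Set.Icc (0 : ℝ) 1) (s : S) : polRew τ r s ∈ Set.Icc (0 : ℝ) 1 :=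
  ⟨Finset.sum_nonneg fun a _ => mul_nonneg ((hτ s).1 a) (hr s a).1,
    (Finset.sum_le_sum fun a _ => mul_le_of_le_one_right ((hτ s).1 a) (hr s a).2).trans
      (hτ s).2.le⟩

theorem abs_polRew_sub_le (hr : ∀ s a, r s a ∈ Set.Icc (0 : ℝ) 1) (s : S) :
    |polRew τ r s - polRew τ' r s| ≤ ∑ a, |τ s a - τ' s a| := by
  simp only [polRew, ← Finset.sum_sub_distrib, ← sub_mul]
  refine (Finset.abs_sum_le_sum_abs _ _).trans (Finset.sum_le_sum fun a _ => ?_)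
  rw [abs_mul]
  exact mul_le_of_le_one_right (abs_nonneg _) (abs_le.2 ⟨by linarith [(hr s a).1], (hr s a).2⟩)

variable [Fintype S]

theorem sum_abs_polMat_sub_le (hτ' : ∀ s, τ' s ∈ stdSimplex ℝ A)
    (hP : ∀ s a, P s a ∈ stdSimplex ℝ S) (s : S) :
    ∑ x, |polMat τ P s x - polMat τ' P' s x|
      ≤ ∑ a, |τ s a - τ' s a| + ∑ a, ∑ x, |P s a x - P' s a x| := by
  have hsplit : ∀ x, polMat τ P s x - polMat τ' P' s x
      = ∑ a, ((τ s a - τ' s a) * P s a x + τ' s a * (P s a x - P' s a x)) := fun x => by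
    simp only [polMat, of_apply, ← Finset.sum_sub_distrib]
    exact Finset.sum_congr rfl fun a _ => by ring
  calc ∑ x, |polMat τ P s x - polMat τ' P' s x|
      ≤ ∑ x, ∑ a, (|τ s a - τ' s a| * P s a x + |P s a x - P' s a x|) := by
        refine Finset.sum_le_sum fun x _ => ?_
        rw [hsplit]
        refine (Finset.abs_sum_le_sum_abs _ _).trans (Finset.sum_le_sum fun a _ => ?_)
        refine (abs_add_le _ _).trans (add_le_add ?_ ?_) <;> rw [abs_mul]
        · rw [abs_of_nonneg ((hP s a).1 x)]
        · exact mul_le_of_le_one_left (abs_nonneg _) (abs_le.2 ⟨by linarith [(hτ' s).1 a],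
            (Finset.single_le_sum (fun b _ => (hτ' s).1 b) (Finset.mem_univ a)).trans
              (hτ' s).2.le⟩)
    _ = ∑ a, |τ s a - τ' s a| + ∑ a, ∑ x, |P s a x - P' s a x| := by
        rw [Finset.sum_comm, ← Finset.sum_add_distrib]
        refine Finset.sum_congr rfl fun a _ => ?_
        rw [Finset.sum_add_distrib, ← Finset.mul_sum, (hP s a).2, mul_one]

variable [DecidableEq S]

theorem polMat_mem_rowStochastic (hτ : ∀ s, τ s ∈ stdSimplex ℝ A)
    (hP : ∀ s a, P s a ∈ stdSimplex ℝ S) : polMat τ P ∈ rowStochastic ℝ S := by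
  refine mem_rowStochastic_iff_sum.2 ⟨fun s s' => Finset.sum_nonneg fun a _ =>
    mul_nonneg ((hτ s).1 a) ((hP s a).1 s'), fun s => ?_⟩
  simp only [polMat, of_apply]
  rw [Finset.sum_comm]
  simp [← Finset.mul_sum, (hP s _).2, (hτ s).2]

/-- For `d s` an action that `τ` plays with positive probability at `s`, the support of `P^d` is
contained in that of `P^τ`. -/
theorem irredM_polMat (hτ : ∀ s, τ s ∈ stdSimplex ℝ A) (hP : ∀ s a, P s a ∈ stdSimplex ℝ S)
    (hirr : ∀ d : S → A, IrredM (of fun s s' => P s (d s) s')) : IrredM (polMat τ P) := by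
  have hsupp : ∀ s, ∃ a, 0 < τ s a := fun s => by
    obtain ⟨a, -, ha⟩ := Finset.exists_lt_of_sum_lt (s := Finset.univ) (f := fun _ => (0 : ℝ))
      (g := τ s) (by rw [Finset.sum_const_zero, (hτ s).2]; exact one_pos)
    exact ⟨a, ha⟩
  choose d hd using hsupp
  refine (hirr d).of_pos_imp_pos (mem_rowStochastic_iff_sum.2 ⟨fun s s' => (hP s (d s)).1 s',
    fun s => (hP s (d s)).2⟩) (polMat_mem_rowStochastic hτ hP) fun s s' hpos => ?_
  exact (mul_pos (hd s) hpos).trans_le (Finset.single_le_sum (f := fun a => τ s a * P s a s')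
    (fun a _ => mul_nonneg ((hτ s).1 a) ((hP s a).1 s')) (Finset.mem_univ (d s)))

end Policies


section RobustGame

open Topology

theorem tendsto_sum_sum_abs_sub_zero {X Y ι : Type*} [Fintype X] [Fintype Y] {l : Filter ι}
    {f : ι → X → Y → ℝ} {g : X → Y → ℝ} (hf : Tendsto f l (𝓝 g)) :
    Tendsto (fun t => ∑ x, ∑ y, |f t x y - g x y|) l (𝓝 0) := by
  have := ((by fun_prop : Continuous fun h : X → Y → ℝ =>
    ∑ x, ∑ y, |h x y - g x y|).tendsto g).comp hf
  simp only [sub_self, abs_zero, Finset.sum_const_zero] at this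
  exact this

variable {S A : Type*} {U : S → A → Set (S → ℝ)}

theorem isCompact_setOf_forall_mem_stdSimplex [Fintype A] :
    IsCompact {τ : S → A → ℝ | ∀ s, τ s ∈ stdSimplex ℝ A} := by
  convert isCompact_univ_pi fun _ : S => isCompact_stdSimplex ℝ A using 1
  ext τ
  simp

theorem isCompact_setOf_forall_mem (hUc : ∀ s a, IsCompact (U s a)) :
    IsCompact {P : S → A → S → ℝ | ∀ s a, P s a ∈ U s a} := by
  convert isCompact_univ_pi fun s => isCompact_univ_pi fun a => hUc s a using 1
  ext P
  simp

theorem nonempty_setOf_forall_mem (hUne : ∀ s a, (U s a).Nonempty) :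
    {P : S → A → S → ℝ | ∀ s a, P s a ∈ U s a}.Nonempty :=
  ⟨fun s a => (hUne s a).some, fun s a => (hUne s a).some_mem⟩

variable [Fintype S] [DecidableEq S] [Fintype A] {r : S → A → ℝ} {τ τ' : S → A → ℝ}
  {P : S → A → S → ℝ}

theorem exists_minorization_polMat [Nonempty S] (hUc : ∀ s a, IsCompact (U s a))
    (hUs : ∀ s a, U s a ⊆ stdSimplex ℝ S) (hirr : Assump1 U) :
    ∃ K : ℕ, ∃ α > 0, ∀ τ : S → A → ℝ, (∀ s, τ s ∈ stdSimplex ℝ A) →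
      ∀ P : S → A → S → ℝ, (∀ s a, P s a ∈ U s a) →
        ∀ s s', α ≤ ∑ k ∈ Finset.Icc 1 K, (polMat τ P ^ k) s s' := by
  set X := {τ : S → A → ℝ | ∀ s, τ s ∈ stdSimplex ℝ A} ×ˢ
    {P : S → A → S → ℝ | ∀ s a, P s a ∈ U s a}
  set f : ℕ → (S → A → ℝ) × (S → A → S → ℝ) → S × S → ℝ :=
    fun n x p => ∑ k ∈ Finset.Icc 1 n, (polMat x.1 x.2 ^ k) p.1 p.2
  have hcont : ∀ n p, Continuous fun x => f n x p := fun n p =>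
    continuous_finsetSum _ fun k _ => by simp only [polMat]; fun_prop
  have hmono : ∀ x ∈ X, Monotone fun n => f n x := by
    rintro ⟨τ, P⟩ ⟨hτ, hP⟩ m n hmn p
    have hQ := polMat_mem_rowStochastic hτ fun s a => hUs s a (hP s a)
    exact Finset.sum_le_sum_of_subset_of_nonneg (Finset.Icc_subset_Icc_right hmn)
      fun k _ _ => nonneg_of_mem_rowStochastic (pow_mem hQ k)
  have hpos : ∀ x ∈ X, ∃ n, ∀ p, 0 < f n x p := by
    rintro ⟨τ, P⟩ ⟨hτ, hP⟩
    have hPs : ∀ s a, P s a ∈ stdSimplex ℝ S := fun s a => hUs s a (hP s a)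
    have hQ := polMat_mem_rowStochastic hτ hPs
    choose k hk hkpos using fun p : S × S => irredM_polMat hτ hPs (fun d => hirr d P hP) p.1 p.2
    refine ⟨Finset.univ.sup k, fun p => (hkpos p).trans_le ?_⟩
    exact Finset.single_le_sum (fun j _ => nonneg_of_mem_rowStochastic (pow_mem hQ j))
      (Finset.mem_Icc.2 ⟨hk p, Finset.le_sup (Finset.mem_univ p)⟩)
  obtain ⟨K, α, hα, hmin⟩ := (isCompact_setOf_forall_mem_stdSimplex.prod
    (isCompact_setOf_forall_mem hUc)).exists_pos_le_of_forall_exists_pos hcont hmono hpos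
  exact ⟨K, α, hα, fun τ hτ P hP s s' => hmin (τ, P) ⟨hτ, hP⟩ (s, s')⟩

theorem exists_discR_sub_le [Nonempty S] (hUc : ∀ s a, IsCompact (U s a))
    (hUs : ∀ s a, U s a ⊆ stdSimplex ℝ S) (hirr : Assump1 U)
    (hr : ∀ s a, r s a ∈ Set.Icc (0 : ℝ) 1) :
    ∃ C : ℝ, ∀ τ : S → A → ℝ, (∀ s, τ s ∈ stdSimplex ℝ A) →
      ∀ P : S → A → S → ℝ, (∀ s a, P s a ∈ U s a) → ∀ γ ∈ Set.Ico (0 : ℝ) 1,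
        ∀ x y, discR τ P r γ x - discR τ P r γ y ≤ C := by
  obtain ⟨K, α, hα, hmin⟩ := exists_minorization_polMat hUc hUs hirr
  exact ⟨_, fun τ hτ P hP γ hγ x y => discountedValue_sub_le_of_minorization
    (polMat_mem_rowStochastic hτ fun s a => hUs s a (hP s a)) (polRew_mem_Icc hτ hr) hγ hα
    (hmin τ hτ P hP) x y⟩

theorem one_sub_mul_abs_discR_sub_le {P' : S → A → S → ℝ} {γ C : ℝ}
    (hτ : ∀ s, τ s ∈ stdSimplex ℝ A) (hτ' : ∀ s, τ' s ∈ stdSimplex ℝ A)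
    (hP : ∀ s a, P s a ∈ stdSimplex ℝ S) (hP' : ∀ s a, P' s a ∈ stdSimplex ℝ S)
    (hr : ∀ s a, r s a ∈ Set.Icc (0 : ℝ) 1) (hγ : γ ∈ Set.Ico (0 : ℝ) 1)
    (hC : ∀ x y, discR τ' P' r γ x - discR τ' P' r γ y ≤ C) (s : S) :
    (1 - γ) * |discR τ P r γ s - discR τ' P' r γ s|
      ≤ (1 + C) * ∑ x, ∑ a, |τ x a - τ' x a| + C * ∑ x, ∑ a, ∑ y, |P x a y - P' x a y| := by
  set η := ∑ x, ∑ a, |τ x a - τ' x a|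
  set ζ := ∑ x, ∑ a, ∑ y, |P x a y - P' x a y|
  have hη : ∀ x, ∑ a, |τ x a - τ' x a| ≤ η := fun x =>
    Finset.single_le_sum (f := fun x => ∑ a, |τ x a - τ' x a|)
      (fun x _ => Finset.sum_nonneg fun a _ => abs_nonneg _) (Finset.mem_univ x)
  have hζ : ∀ x, ∑ a, ∑ y, |P x a y - P' x a y| ≤ ζ := fun x =>
    Finset.single_le_sum (f := fun x => ∑ a, ∑ y, |P x a y - P' x a y|)
      (fun x _ => Finset.sum_nonneg fun a _ => Finset.sum_nonneg fun y _ => abs_nonneg _)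
      (Finset.mem_univ x)
  calc (1 - γ) * |discR τ P r γ s - discR τ' P' r γ s| ≤ η + (η + ζ) * C :=
        one_sub_mul_abs_discountedValue_sub_le (polMat_mem_rowStochastic hτ hP)
          (polMat_mem_rowStochastic hτ' hP') (polRew_mem_Icc hτ hr) (polRew_mem_Icc hτ' hr) hγ
          (fun x => (abs_polRew_sub_le hr x).trans (hη x))
          (fun x => (sum_abs_polMat_sub_le hτ' hP x).trans (add_le_add (hη x) (hζ x))) hC s
    _ = (1 + C) * η + C * ζ := by ring

theorem avgR_nonneg (hτ : ∀ s, τ s ∈ stdSimplex ℝ A) (hP : ∀ s a, P s a ∈ stdSimplex ℝ S)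
    (hr : ∀ s a, r s a ∈ Set.Icc (0 : ℝ) 1) (s : S) : 0 ≤ avgR τ P r s := by
  obtain ⟨c, hces, -⟩ := exists_tendsto_cesaro_and_abel (polMat_mem_rowStochastic hτ hP)
    (polRew τ r) s
  rw [avgR, hces.liminf_eq]
  exact ge_of_tendsto' hces fun n => div_nonneg (Finset.sum_nonneg fun t _ =>
    (pow_mulVec_mem_Icc (polMat_mem_rowStochastic hτ hP) (polRew_mem_Icc hτ hr) t s).1)
    n.cast_nonneg

theorem tendsto_one_sub_mul_discR {ι : Type*} {l : Filter ι} {γ : ι → ℝ}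
    (hτ : ∀ s, τ s ∈ stdSimplex ℝ A) (hP : ∀ s a, P s a ∈ stdSimplex ℝ S)
    (hγ : ∀ k, γ k ∈ Set.Ico (0 : ℝ) 1) (hγ1 : Tendsto γ l (𝓝 1)) (s : S) :
    Tendsto (fun k => (1 - γ k) * discR τ P r (γ k) s) l (𝓝 (avgR τ P r s)) := by
  obtain ⟨c, hces, habel⟩ := exists_tendsto_cesaro_and_abel (polMat_mem_rowStochastic hτ hP)
    (polRew τ r) s
  rw [avgR, hces.liminf_eq]
  exact habel.comp (tendsto_nhdsWithin_iff.2 ⟨hγ1, Eventually.of_forall fun k => (hγ k).2⟩)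

theorem robDiscR_le_discR {γ : ℝ} (hUs : ∀ s a, U s a ⊆ stdSimplex ℝ S)
    (hτ : ∀ s, τ s ∈ stdSimplex ℝ A) (hr : ∀ s a, r s a ∈ Set.Icc (0 : ℝ) 1)
    (hγ : γ ∈ Set.Ico (0 : ℝ) 1) (hP : ∀ s a, P s a ∈ U s a) (s : S) :
    robDiscR U τ r γ s ≤ discR τ P r γ s := by
  refine csInf_le ⟨0, ?_⟩ ⟨P, hP, rfl⟩
  rintro _ ⟨P', hP', rfl⟩
  exact (discountedValue_mem_Icc (polMat_mem_rowStochastic hτ fun s a => hUs s a (hP' s a))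
    (polRew_mem_Icc hτ hr) hγ s).1

theorem robAvgR_le_avgR (hUs : ∀ s a, U s a ⊆ stdSimplex ℝ S)
    (hτ : ∀ s, τ s ∈ stdSimplex ℝ A) (hr : ∀ s a, r s a ∈ Set.Icc (0 : ℝ) 1)
    (hP : ∀ s a, P s a ∈ U s a) (s : S) : robAvgR U τ r s ≤ avgR τ P r s := by
  refine csInf_le ⟨0, ?_⟩ ⟨P, hP, rfl⟩
  rintro _ ⟨P', hP', rfl⟩
  exact avgR_nonneg hτ (fun s a => hUs s a (hP' s a)) hr s

theorem one_sub_mul_robDiscR_le {γ C : ℝ} (hUne : ∀ s a, (U s a).Nonempty)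
    (hUs : ∀ s a, U s a ⊆ stdSimplex ℝ S) (hτ : ∀ s, τ s ∈ stdSimplex ℝ A)
    (hτ' : ∀ s, τ' s ∈ stdSimplex ℝ A) (hr : ∀ s a, r s a ∈ Set.Icc (0 : ℝ) 1)
    (hγ : γ ∈ Set.Ico (0 : ℝ) 1)
    (hC : ∀ P : S → A → S → ℝ, (∀ s a, P s a ∈ U s a) →
      ∀ x y, discR τ' P r γ x - discR τ' P r γ y ≤ C) (s : S) :
    (1 - γ) * robDiscR U τ r γ s
      ≤ (1 - γ) * robDiscR U τ' r γ s + (1 + C) * ∑ x, ∑ a, |τ x a - τ' x a| := by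
  set L := (1 + C) * ∑ x, ∑ a, |τ x a - τ' x a|
  have h1γ : 0 < 1 - γ := by linarith [hγ.2]
  suffices robDiscR U τ r γ s - L / (1 - γ) ≤ robDiscR U τ' r γ s by
    have := mul_le_mul_of_nonneg_left this h1γ.le
    rw [mul_sub, mul_div_cancel₀ _ h1γ.ne'] at this
    linarith
  obtain ⟨P₀, hP₀⟩ := nonempty_setOf_forall_mem hUne
  refine le_csInf ⟨_, P₀, hP₀, rfl⟩ ?_
  rintro _ ⟨P, hP, rfl⟩
  have hPs : ∀ s a, P s a ∈ stdSimplex ℝ S := fun s a => hUs s a (hP s a)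
  have hlip := one_sub_mul_abs_discR_sub_le hτ hτ' hPs hPs hr hγ (hC P hP) s
  simp only [sub_self, abs_zero, Finset.sum_const_zero, mul_zero, add_zero] at hlip
  have hdiff : discR τ P r γ s - discR τ' P r γ s ≤ L / (1 - γ) := by
    rw [le_div_iff₀' h1γ]
    exact (mul_le_mul_of_nonneg_left (le_abs_self _) h1γ.le).trans hlip
  linarith [robDiscR_le_discR hUs hτ hr hγ hP s]

theorem eventually_one_sub_mul_robDiscR_lt {ι : Type*} {l : Filter ι} {γ : ι → ℝ} {c : ℝ}
    (hUne : ∀ s a, (U s a).Nonempty) (hUs : ∀ s a, U s a ⊆ stdSimplex ℝ S)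
    (hτ : ∀ s, τ s ∈ stdSimplex ℝ A) (hr : ∀ s a, r s a ∈ Set.Icc (0 : ℝ) 1)
    (hγ : ∀ k, γ k ∈ Set.Ico (0 : ℝ) 1) (hγ1 : Tendsto γ l (𝓝 1)) {s : S}
    (hc : robAvgR U τ r s < c) : ∀ᶠ k in l, (1 - γ k) * robDiscR U τ r (γ k) s < c := by
  obtain ⟨P₀, hP₀⟩ := nonempty_setOf_forall_mem hUne
  obtain ⟨_, ⟨P, hP, rfl⟩, hPc⟩ := exists_lt_of_csInf_lt (by exact ⟨_, P₀, hP₀, rfl⟩) hc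
  filter_upwards [(tendsto_one_sub_mul_discR hτ (fun s a => hUs s a (hP s a)) hγ hγ1
    s).eventually (gt_mem_nhds hPc)] with k hk
  exact (mul_le_mul_of_nonneg_left (robDiscR_le_discR hUs hτ hr (hγ k) hP s)
    (by linarith [(hγ k).2])).trans_lt hk

/-- The kernels that nearly minimize the discounted values have a convergent subsequence, and the
span bound `C` makes the discounted values of its limit kernel close to theirs. -/
theorem robAvgR_le_of_eventually_le {γ e : ℕ → ℝ} {C c : ℝ} (hUne : ∀ s a, (U s a).Nonempty)
    (hUc : ∀ s a, IsCompact (U s a)) (hUs : ∀ s a, U s a ⊆ stdSimplex ℝ S)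
    (hτ : ∀ s, τ s ∈ stdSimplex ℝ A) (hr : ∀ s a, r s a ∈ Set.Icc (0 : ℝ) 1)
    (hγ : ∀ k, γ k ∈ Set.Ico (0 : ℝ) 1) (hγ1 : Tendsto γ atTop (𝓝 1))
    (hC : ∀ P : S → A → S → ℝ, (∀ s a, P s a ∈ U s a) →
      ∀ k x y, discR τ P r (γ k) x - discR τ P r (γ k) y ≤ C)
    (he : Tendsto e atTop (𝓝 0)) {s : S}
    (h : ∀ᶠ k in atTop, (1 - γ k) * robDiscR U τ r (γ k) s ≤ c + e k) :
    robAvgR U τ r s ≤ c := by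
  obtain ⟨P₀, hP₀⟩ := nonempty_setOf_forall_mem hUne
  have hnear : ∀ k, ∃ P : S → A → S → ℝ, (∀ s a, P s a ∈ U s a) ∧
      discR τ P r (γ k) s < robDiscR U τ r (γ k) s + 1 := fun k => by
    obtain ⟨_, ⟨P, hP, rfl⟩, hlt⟩ :=
      exists_lt_of_csInf_lt (by exact ⟨_, P₀, hP₀, rfl⟩) (lt_add_one (robDiscR U τ r (γ k) s))
    exact ⟨P, hP, hlt⟩
  choose P hPU hPlt using hnear
  obtain ⟨P', hP', φ, hφ, hlim⟩ := (isCompact_setOf_forall_mem hUc).tendsto_subseq hPU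
  have hφ := hφ.tendsto_atTop
  have hP's : ∀ s a, P' s a ∈ stdSimplex ℝ S := fun s a => hUs s a (hP' s a)
  set d : ℕ → ℝ := fun k => ∑ x, ∑ a, ∑ y, |P' x a y - P (φ k) x a y|
  have hd : Tendsto d atTop (𝓝 0) := by
    have := ((by fun_prop : Continuous fun Q : S → A → S → ℝ =>
      ∑ x, ∑ a, ∑ y, |P' x a y - Q x a y|).tendsto P').comp hlim
    simp only [sub_self, abs_zero, Finset.sum_const_zero] at this
    exact this
  have hlhs := tendsto_one_sub_mul_discR (r := r) hτ hP's (fun k => hγ (φ k)) (hγ1.comp hφ) s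
  have hrhs : Tendsto (fun k => c + e (φ k) + (1 - γ (φ k)) + C * d k) atTop (𝓝 c) := by
    simpa using (((he.comp hφ).const_add c).add ((hγ1.comp hφ).const_sub 1)).add
      (hd.const_mul C)
  refine (robAvgR_le_avgR hUs hτ hr hP' s).trans (le_of_tendsto_of_tendsto hlhs hrhs ?_)
  filter_upwards [hφ.eventually h] with k hk
  have h1γ : 0 ≤ 1 - γ (φ k) := by linarith [(hγ (φ k)).2]
  have hlip := one_sub_mul_abs_discR_sub_le hτ hτ hP's (fun s a => hUs s a (hPU (φ k) s a)) hr
    (hγ (φ k)) (hC _ (hPU (φ k)) (φ k)) s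
  simp only [sub_self, abs_zero, Finset.sum_const_zero, mul_zero, zero_add] at hlip
  have hnear := mul_le_mul_of_nonneg_left (hPlt (φ k)).le h1γ
  have habs := mul_le_mul_of_nonneg_left
    (le_abs_self (discR τ P' r (γ (φ k)) s - discR τ (P (φ k)) r (γ (φ k)) s)) h1γ
  linarith

theorem robAvgR_le_robAvgR_of_tendsto [Nonempty S] {γ : ℕ → ℝ} {ρ σ : S → A → ℝ}
    {ρt σt : ℕ → S → A → ℝ} (hUne : ∀ s a, (U s a).Nonempty) (hUc : ∀ s a, IsCompact (U s a))
    (hUs : ∀ s a, U s a ⊆ stdSimplex ℝ S) (hirr : Assump1 U)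
    (hr : ∀ s a, r s a ∈ Set.Icc (0 : ℝ) 1) (hρ : ∀ s, ρ s ∈ stdSimplex ℝ A)
    (hσ : ∀ s, σ s ∈ stdSimplex ℝ A) (hρt : ∀ t s, ρt t s ∈ stdSimplex ℝ A)
    (hσt : ∀ t s, σt t s ∈ stdSimplex ℝ A) (hγ : ∀ k, γ k ∈ Set.Ico (0 : ℝ) 1)
    (hγ1 : Tendsto γ atTop (𝓝 1)) (hρlim : Tendsto ρt atTop (𝓝 ρ))
    (hσlim : Tendsto σt atTop (𝓝 σ)) {s : S}
    (hle : ∀ t, robDiscR U (ρt t) r (γ t) s ≤ robDiscR U (σt t) r (γ t) s) :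
    robAvgR U ρ r s ≤ robAvgR U σ r s := by
  obtain ⟨C, hC⟩ := exists_discR_sub_le hUc hUs hirr hr
  have hdρ := tendsto_sum_sum_abs_sub_zero hρlim
  have hdσ := tendsto_sum_sum_abs_sub_zero hσlim
  simp only [abs_sub_comm (ρt _ _ _)] at hdρ
  refine le_of_forall_gt_imp_ge_of_dense fun c hc => robAvgR_le_of_eventually_le hUne hUc hUs
    hρ hr hγ hγ1 (fun P hP k => hC _ hρ P hP _ (hγ k))
    (by simpa using (hdσ.add hdρ).const_mul (1 + C)) ?_
  filter_upwards [eventually_one_sub_mul_robDiscR_lt hUne hUs hσ hr hγ hγ1 hc] with t ht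
  have h1γ : 0 ≤ 1 - γ t := by linarith [(hγ t).2]
  have hdev := one_sub_mul_robDiscR_le hUne hUs hρ (hρt t) hr (hγ t)
    (fun P hP => hC _ (hρt t) P hP _ (hγ t)) s
  have hcmp := mul_le_mul_of_nonneg_left (hle t) h1γ
  have hback := one_sub_mul_robDiscR_le hUne hUs (hσt t) hσ hr (hγ t)
    (fun P hP => hC _ hσ P hP _ (hγ t)) s
  linarith

end RobustGame

section ProductPolicies

variable {S : Type*} {N : ℕ} {A : Fin N → Type*}

theorem jointPol_mem_stdSimplex [∀ i, Fintype (A i)] {π : ∀ i, S → A i → ℝ}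
    (hπ : ∀ i s, π i s ∈ stdSimplex ℝ (A i)) (s : S) :
    jointPol π s ∈ stdSimplex ℝ (∀ i, A i) := by
  refine ⟨fun a => Finset.prod_nonneg fun i _ => (hπ i s).1 (a i), ?_⟩
  have := Finset.prod_univ_sum (fun i : Fin N => (Finset.univ : Finset (A i))) fun i => π i s
  rw [Fintype.piFinset_univ] at this
  simp only [jointPol, ← this, (hπ _ s).2, Finset.prod_const_one]

theorem continuous_jointPol :
    Continuous (jointPol : (∀ i, S → A i → ℝ) → S → (∀ i, A i) → ℝ) := by
  unfold jointPol
  fun_prop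

end ProductPolicies

theorem stmt15_general {S : Type*} [Fintype S] [DecidableEq S] [Nonempty S]
    {N : ℕ} (A : Fin N → Type*) [∀ i, Fintype (A i)]
    (r : Fin N → S → (∀ i, A i) → ℝ)
    (hr : ∀ i s a, r i s a ∈ Set.Icc (0 : ℝ) 1)
    (U : S → (∀ i, A i) → Set (S → ℝ))
    (hU : ∀ s a, (U s a).Nonempty ∧ IsCompact (U s a) ∧ Convex ℝ (U s a) ∧
      U s a ⊆ stdSimplex ℝ S)
    (hirr : Assump1 U)
    (γ : ℕ → ℝ) (hγ : ∀ t, γ t ∈ Set.Ico (0 : ℝ) 1)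
    (hγ1 : Filter.Tendsto γ Filter.atTop (nhds 1))
    (πseq : ℕ → ∀ i, S → A i → ℝ)
    (hπseq : ∀ t i s, πseq t i s ∈ stdSimplex ℝ (A i))
    (hNEseq : ∀ t (i : Fin N) (μ : S → A i → ℝ), (∀ s, μ s ∈ stdSimplex ℝ (A i)) →
      ∀ s, robDiscR U (jointPol (Function.update (πseq t) i μ)) (r i) (γ t) s
        ≤ robDiscR U (jointPol (πseq t)) (r i) (γ t) s)
    (π : ∀ i, S → A i → ℝ) (hπ : ∀ i s, π i s ∈ stdSimplex ℝ (A i))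
    (hconv : ∀ (i : Fin N) (s : S) (a : A i),
      Filter.Tendsto (fun t => πseq t i s a) Filter.atTop (nhds (π i s a))) :
    ∀ (i : Fin N) (μ : S → A i → ℝ), (∀ s, μ s ∈ stdSimplex ℝ (A i)) →
      ∀ s, robAvgR U (jointPol (Function.update π i μ)) (r i) s
        ≤ robAvgR U (jointPol π) (r i) s := by
  intro i μ hμ s
  have hupd : ∀ π' : ∀ j, S → A j → ℝ, (∀ j s, π' j s ∈ stdSimplex ℝ (A j)) →
      ∀ j s, Function.update π' i μ j s ∈ stdSimplex ℝ (A j) := fun π' hπ' =>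
    (Function.forall_update_iff π' (p := fun j f => ∀ s, f s ∈ stdSimplex ℝ (A j))).2
      ⟨hμ, fun j _ => hπ' j⟩
  have hπt : Tendsto πseq atTop (nhds π) :=
    tendsto_pi_nhds.2 fun j => tendsto_pi_nhds.2 fun s => tendsto_pi_nhds.2 (hconv j s)
  exact robAvgR_le_robAvgR_of_tendsto (fun s a => (hU s a).1) (fun s a => (hU s a).2.1)
    (fun s a => (hU s a).2.2.2) hirr (hr i) (jointPol_mem_stdSimplex (hupd π hπ))
    (jointPol_mem_stdSimplex hπ) (fun t => jointPol_mem_stdSimplex (hupd _ (hπseq t)))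
    (fun t => jointPol_mem_stdSimplex (hπseq t)) hγ hγ1
    ((continuous_jointPol.tendsto _).comp (hπt.update i (tendsto_const_nhds (x := μ))))
    ((continuous_jointPol.tendsto π).comp hπt) fun t => hNEseq t i μ hμ s

/-- Pointwise limits of Nash Equilibria of `γ_t`-discounted
distributionally robust Markov games, as `γ_t → 1`, are Nash Equilibria of the
average-reward distributionally robust Markov game. -/
theorem stmt15 {S : Type*} [Fintype S] [DecidableEq S] [Nonempty S]
    {N : ℕ} (A : Fin N → Type*) [∀ i, Fintype (A i)] [∀ i, Nonempty (A i)]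
    (r : Fin N → S → (∀ i, A i) → ℝ)
    (hr : ∀ i s a, r i s a ∈ Set.Icc (0 : ℝ) 1)
    (U : S → (∀ i, A i) → Set (S → ℝ))
    (hU : ∀ s a, (U s a).Nonempty ∧ IsCompact (U s a) ∧ Convex ℝ (U s a) ∧
      U s a ⊆ stdSimplex ℝ S)
    (hirr : Assump1 U)
    (γ : ℕ → ℝ) (hγ : ∀ t, γ t ∈ Set.Ico (0 : ℝ) 1)
    (hγ1 : Filter.Tendsto γ Filter.atTop (nhds 1))
    (πseq : ℕ → ∀ i, S → A i → ℝ)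
    (hπseq : ∀ t i s, πseq t i s ∈ stdSimplex ℝ (A i))
    (hNEseq : ∀ t (i : Fin N) (μ : S → A i → ℝ), (∀ s, μ s ∈ stdSimplex ℝ (A i)) →
      ∀ s, robDiscR U (jointPol (Function.update (πseq t) i μ)) (r i) (γ t) s
        ≤ robDiscR U (jointPol (πseq t)) (r i) (γ t) s)
    (π : ∀ i, S → A i → ℝ) (hπ : ∀ i s, π i s ∈ stdSimplex ℝ (A i))
    (hconv : ∀ (i : Fin N) (s : S) (a : A i),
      Filter.Tendsto (fun t => πseq t i s a) Filter.atTop (nhds (π i s a))) :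
    ∀ (i : Fin N) (μ : S → A i → ℝ), (∀ s, μ s ∈ stdSimplex ℝ (A i)) →
      ∀ s, robAvgR U (jointPol (Function.update π i μ)) (r i) s
        ≤ robAvgR U (jointPol π) (r i) s :=
  stmt15_general A r hr U hU hirr γ hγ hγ1 πseq hπseq hNEseq π hπ hconv
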